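/- arXiv:2508.06867 — 2 statements merged into one kernel-verified Lean document; each statement's English description precedes it below -/
import Mathlib

section
/- In the abstract gradient-discretisation setting with the L-solver setting, for every i ≥ 1 one has the one-step error inequality 2·‖e_i‖_*² + δt·L·‖e_i‖_m² ≤ δt·L·‖e_{i−1}‖_m², where e_i = u − u_i. -/
/-- Weighted inner product `⟨u, v⟩_m = ∑ j, m j * u j * v j` on `X = B → ℝ`. -/
noncomputable def innerM {B : Type*} [Fintype B] (m : B → ℝ) (u v : B → ℝ) : ℝ :=
  ∑ j, m j * u j * v j

/-- Weighted norm `‖u‖_m = ⟨u, u⟩_m^{1/2}`. -/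
noncomputable def normM {B : Type*} [Fintype B] (m : B → ℝ) (u : B → ℝ) : ℝ :=
  Real.sqrt (innerM m u u)

/-- The dual norm `‖v‖_* = sup { ⟨v, w⟩_m : w ∈ X, ‖G w‖ = 1 }`. -/
noncomputable def dualNorm {B : Type*} [Fintype B] (m : B → ℝ)
    {F : Type*} [NormedAddCommGroup F] [InnerProductSpace ℝ F]
    (G : (B → ℝ) →ₗ[ℝ] F) (v : B → ℝ) : ℝ :=
  sSup {r : ℝ | ∃ w : B → ℝ, ‖G w‖ = 1 ∧ r = innerM m v w}

/-!
Subtracting the iteration from the scheme gives the error equation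
`⟨e_i, φ⟩_m = δt ⟨G ψ, G φ⟩` with `ψ = L (u_i - u_{i-1}) - (ζ(u) - ζ(u_{i-1}))`.
Testing it against all `φ` with `‖G φ‖ = 1` gives `‖e_i‖_* ≤ δt ‖G ψ‖`, and testing it against
`ψ` gives `δt ‖G ψ‖² = ⟨e_i, ψ⟩_m`, so `‖e_i‖_*² ≤ δt ⟨e_i, ψ⟩_m`. Finally, since `ζ` is monotone and
`L_ζ`-Lipschitz, `(ζ a - ζ b)² ≤ L_ζ (ζ a - ζ b)(a - b)`, which together with `L ≥ L_ζ / 2` bounds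
`⟨e_i, ψ⟩_m` node by node by `L/2 (‖e_{i-1}‖_m² - ‖e_i‖_m²)`.
-/

section WeightedInner

variable {B : Type*} [Fintype B]

lemma innerM_self_nonneg {m : B → ℝ} (hm : ∀ j, 0 ≤ m j) (v : B → ℝ) : 0 ≤ innerM m v v :=
  Finset.sum_nonneg fun j _ => by
    simpa only [mul_assoc] using mul_nonneg (hm j) (mul_self_nonneg (v j))

lemma normM_sq {m : B → ℝ} (hm : ∀ j, 0 ≤ m j) (v : B → ℝ) : normM m v ^ 2 = innerM m v v :=
  Real.sq_sqrt (innerM_self_nonneg hm v)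

lemma innerM_sub_left (m u v w : B → ℝ) : innerM m (u - v) w = innerM m u w - innerM m v w := by
  simp only [innerM, Pi.sub_apply, mul_sub, sub_mul, Finset.sum_sub_distrib]

lemma innerM_neg_right (m u w : B → ℝ) : innerM m u (-w) = -innerM m u w := by
  simp only [innerM, Pi.neg_apply, mul_neg, Finset.sum_neg_distrib]

end WeightedInner

section DualNorm

variable {B : Type*} [Fintype B] (m : B → ℝ) {F : Type*} [NormedAddCommGroup F]
  [InnerProductSpace ℝ F] (G : (B → ℝ) →ₗ[ℝ] F)

/-- The set defining `dualNorm` is symmetric, so its supremum is nonnegative even when it is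
empty or unbounded (where `sSup` takes the junk value `0`). -/
lemma dualNorm_nonneg (v : B → ℝ) : 0 ≤ dualNorm m G v := by
  obtain hempty | ⟨_, w, hw, rfl⟩ :=
    {r : ℝ | ∃ w : B → ℝ, ‖G w‖ = 1 ∧ r = innerM m v w}.eq_empty_or_nonempty
  · rw [dualNorm, hempty, Real.sSup_empty]
  · refine Real.sSup_nonneg' ?_
    rcases le_total 0 (innerM m v w) with hpos | hneg
    · exact ⟨_, ⟨w, hw, rfl⟩, hpos⟩
    · exact ⟨_, ⟨-w, by rwa [map_neg, norm_neg], (innerM_neg_right m v w).symm⟩, neg_nonneg.2 hneg⟩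

lemma dualNorm_le_of_innerM_le {v : B → ℝ} {C : ℝ} (hC : 0 ≤ C)
    (h : ∀ w, innerM m v w ≤ C * ‖G w‖) : dualNorm m G v ≤ C :=
  Real.sSup_le (fun _ ⟨w, hw, hr⟩ => hr ▸ by simpa [hw] using h w) hC

end DualNorm

lemma sq_sub_le_mul_sub_mul_sub_of_monotone {ζ : ℝ → ℝ} {K : ℝ} (hmono : Monotone ζ)
    (hlip : ∀ a b : ℝ, |ζ a - ζ b| ≤ K * |a - b|) (a b : ℝ) :
    (ζ a - ζ b) ^ 2 ≤ K * ((ζ a - ζ b) * (a - b)) := by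
  have hprod : 0 ≤ (ζ a - ζ b) * (a - b) := (monovary_id_iff.2 hmono).sub_mul_sub_nonneg b a
  calc (ζ a - ζ b) ^ 2 = |ζ a - ζ b| * |ζ a - ζ b| := by rw [abs_mul_abs_self, sq]
    _ ≤ K * |a - b| * |ζ a - ζ b| := by gcongr; exact hlip a b
    _ = K * ((ζ a - ζ b) * (a - b)) := by
      rw [mul_assoc, mul_comm |a - b|, ← abs_mul, abs_of_nonneg hprod]

/-- The nodewise form of the estimate, with `a = u j`, `b = u_{i-1} j` and `x = e_i j`. -/
lemma mul_step_le_of_monotone_lipschitz {ζ : ℝ → ℝ} {K L : ℝ} (hmono : Monotone ζ)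
    (hlip : ∀ a b : ℝ, |ζ a - ζ b| ≤ K * |a - b|) (hL : L ≥ K / 2) (a b x : ℝ) :
    x * (L * (a - b - x) - (ζ a - ζ b)) ≤ L / 2 * ((a - b) ^ 2 - x ^ 2) := by
  have hK : 0 ≤ K := by simpa using (abs_nonneg _).trans (hlip 1 0)
  have hsq := sq_sub_le_mul_sub_mul_sub_of_monotone hmono hlip a b
  rcases hK.eq_or_lt with rfl | hK
  · have hc : ζ a - ζ b = 0 := by simpa using hsq
    rw [hc]
    nlinarith [sq_nonneg (a - b - x)]
  · -- `K` times the gap is `(K (a - b - x) / 2 - (ζ a - ζ b))² + K / 2 (L - K / 2) (a - b - x)²` plus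
    -- the nonnegative slack in `hsq`.
    nlinarith [sq_nonneg (K * (a - b - x) - 2 * (ζ a - ζ b)),
      mul_nonneg (sub_nonneg.2 hL) (sq_nonneg (a - b - x))]

section LSolver

variable {B : Type*} [Fintype B] {m : B → ℝ} {F : Type*} [NormedAddCommGroup F]
  [InnerProductSpace ℝ F] {G : (B → ℝ) →ₗ[ℝ] F} {δt L : ℝ} {ζ : ℝ → ℝ}
  {b : (B → ℝ) →ₗ[ℝ] ℝ}

lemma innerM_error_eq {u v w : B → ℝ}
    (hu : ∀ φ : B → ℝ, innerM m u φ + δt * (inner ℝ (G (fun j => ζ (u j))) (G φ) : ℝ) = b φ)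
    (hv : ∀ φ : B → ℝ, innerM m v φ + δt * L * (inner ℝ (G v) (G φ) : ℝ)
        = δt * (L * (inner ℝ (G w) (G φ) : ℝ)
            - (inner ℝ (G (fun j => ζ (w j))) (G φ) : ℝ)) + b φ) (φ : B → ℝ) :
    innerM m (u - v) φ
      = δt * inner ℝ (G (L • (v - w) - ((fun j => ζ (u j)) - fun j => ζ (w j)))) (G φ) := by
  simp only [innerM_sub_left, map_sub, map_smul, inner_sub_left, real_inner_smul_left]
  linarith [hu φ, hv φ]

lemma innerM_step_le {u v w : B → ℝ} {K : ℝ} (hm : ∀ j, 0 ≤ m j) (hmono : Monotone ζ)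
    (hlip : ∀ a b : ℝ, |ζ a - ζ b| ≤ K * |a - b|) (hL : L ≥ K / 2) :
    innerM m (u - v) (L • (v - w) - ((fun j => ζ (u j)) - fun j => ζ (w j)))
      ≤ L / 2 * (innerM m (u - w) (u - w) - innerM m (u - v) (u - v)) := by
  simp only [innerM, ← Finset.sum_sub_distrib, Finset.mul_sum]
  refine Finset.sum_le_sum fun j _ => ?_
  have hnode := mul_step_le_of_monotone_lipschitz hmono hlip hL (u j) (w j) (u j - v j)
  calc _ = m j * ((u j - v j) * (L * (u j - w j - (u j - v j)) - (ζ (u j) - ζ (w j)))) := by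
        simp only [Pi.sub_apply, Pi.smul_apply, smul_eq_mul]; ring
    _ ≤ m j * (L / 2 * ((u j - w j) ^ 2 - (u j - v j) ^ 2)) := by gcongr; exact hm j
    _ = _ := by simp only [Pi.sub_apply]; ring

end LSolver

theorem stmt_13_general {B : Type*} [Fintype B] (m : B → ℝ) (hm : ∀ j, 0 < m j)
    {F : Type*} [NormedAddCommGroup F] [InnerProductSpace ℝ F]
    (G : (B → ℝ) →ₗ[ℝ] F)
    (δt Lζ L : ℝ) (hδt : 0 < δt) (hL : L ≥ Lζ / 2)
    (ζ : ℝ → ℝ) (hmono : Monotone ζ) (hlip : ∀ a b : ℝ, |ζ a - ζ b| ≤ Lζ * |a - b|)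
    (b : (B → ℝ) →ₗ[ℝ] ℝ)
    (u : B → ℝ)
    (hu : ∀ φ : B → ℝ,
      innerM m u φ + δt * (inner ℝ (G (fun j => ζ (u j))) (G φ) : ℝ) = b φ)
    (useq : ℕ → B → ℝ)
    (hit : ∀ i : ℕ, 1 ≤ i → ∀ φ : B → ℝ,
      innerM m (useq i) φ + δt * L * (inner ℝ (G (useq i)) (G φ) : ℝ)
        = δt * (L * (inner ℝ (G (useq (i - 1))) (G φ) : ℝ)
            - (inner ℝ (G (fun j => ζ (useq (i - 1) j))) (G φ) : ℝ)) + b φ) :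
    ∀ i : ℕ, 1 ≤ i →
      2 * dualNorm m G (u - useq i) ^ 2 + δt * L * normM m (u - useq i) ^ 2
        ≤ δt * L * normM m (u - useq (i - 1)) ^ 2 := by
  intro i hi
  have hm' : ∀ j, 0 ≤ m j := fun j => (hm j).le
  set ψ := L • (useq i - useq (i - 1)) - ((fun j => ζ (u j)) - fun j => ζ (useq (i - 1) j))
  have herr := innerM_error_eq hu (hit i hi)
  have hdual : dualNorm m G (u - useq i) ≤ δt * ‖G ψ‖ :=
    dualNorm_le_of_innerM_le m G (by positivity) fun w => by
      rw [herr, mul_assoc]; gcongr; exact real_inner_le_norm _ _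
  have henergy : (δt * ‖G ψ‖) ^ 2 = δt * innerM m (u - useq i) ψ := by
    rw [herr, real_inner_self_eq_norm_sq]; ring
  have hstep := innerM_step_le (u := u) (v := useq i) (w := useq (i - 1)) hm' hmono hlip hL
  rw [normM_sq hm', normM_sq hm']
  calc 2 * dualNorm m G (u - useq i) ^ 2 + δt * L * innerM m (u - useq i) (u - useq i)
      ≤ 2 * (δt * ‖G ψ‖) ^ 2 + δt * L * innerM m (u - useq i) (u - useq i) := by
        gcongr; exact dualNorm_nonneg m G _
    _ = 2 * δt * innerM m (u - useq i) ψ + δt * L * innerM m (u - useq i) (u - useq i) := by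
        rw [henergy]; ring
    _ ≤ δt * L * innerM m (u - useq (i - 1)) (u - useq (i - 1)) := by
        linarith [mul_le_mul_of_nonneg_left hstep hδt.le]

/-- One-step error inequality for the linearised (L) solver:
`2 ‖e_i‖_*² + δt L ‖e_i‖_m² ≤ δt L ‖e_{i-1}‖_m²` for every `i ≥ 1`, where `e_i = u - u_i`. -/
theorem stmt_13 {B : Type*} [Fintype B] [Nonempty B] (m : B → ℝ) (hm : ∀ j, 0 < m j)
    {F : Type*} [NormedAddCommGroup F] [InnerProductSpace ℝ F]
    (G : (B → ℝ) →ₗ[ℝ] F) (hG : Function.Injective G)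
    (δt Lζ L : ℝ) (hδt : 0 < δt) (hLζ : 0 < Lζ) (hL : L ≥ Lζ / 2)
    (ζ : ℝ → ℝ) (hmono : Monotone ζ) (hlip : ∀ a b : ℝ, |ζ a - ζ b| ≤ Lζ * |a - b|)
    (b : (B → ℝ) →ₗ[ℝ] ℝ)
    (u : B → ℝ)
    (hu : ∀ φ : B → ℝ,
      innerM m u φ + δt * (inner ℝ (G (fun j => ζ (u j))) (G φ) : ℝ) = b φ)
    (useq : ℕ → B → ℝ)
    (hit : ∀ i : ℕ, 1 ≤ i → ∀ φ : B → ℝ,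
      innerM m (useq i) φ + δt * L * (inner ℝ (G (useq i)) (G φ) : ℝ)
        = δt * (L * (inner ℝ (G (useq (i - 1))) (G φ) : ℝ)
            - (inner ℝ (G (fun j => ζ (useq (i - 1) j))) (G φ) : ℝ)) + b φ) :
    ∀ i : ℕ, 1 ≤ i →
      2 * dualNorm m G (u - useq i) ^ 2 + δt * L * normM m (u - useq i) ^ 2
        ≤ δt * L * normM m (u - useq (i - 1)) ^ 2 :=
  stmt_13_general m hm G δt Lζ L hδt hL ζ hmono hlip b u hu useq hit
end

section
/- In the abstract gradient-discretisation setting with the L-solver setting, the series of squared dual-norm errors converges with 2·∑_{i=1}^∞ ‖e_i‖_*² ≤ δt·L·‖e_0‖_m², and in particular the iterates u_i converge to u in the dual norm: ‖u − u_i‖_* → 0 as i → ∞, for any initial guess u_0 ∈ X. -/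
lemma innerM_sub_left_s14 {B : Type*} [Fintype B] (m x y φ : B → ℝ) :
    innerM m (x - y) φ = innerM m x φ - innerM m y φ := by
  simp [innerM, ← Finset.sum_sub_distrib]
  exact Finset.sum_congr rfl fun j _ => by ring

/-- If the Riesz representative (through `G`) of `v` is `z`, the dual norm of `v` is `‖G z‖`. -/
lemma dualNorm_eq {B : Type*} [Fintype B] [Nonempty B] (m : B → ℝ)
    {F : Type*} [NormedAddCommGroup F] [InnerProductSpace ℝ F]
    (G : (B → ℝ) →ₗ[ℝ] F) (hG : Function.Injective G) (v z : B → ℝ)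
    (h : ∀ φ : B → ℝ, innerM m v φ = (inner ℝ (G z) (G φ) : ℝ)) :
    dualNorm m G v = ‖G z‖ := by
  classical
  have hex : ∃ w : B → ℝ, ‖G w‖ = 1 := by
    obtain ⟨j⟩ := (inferInstance : Nonempty B)
    have hw0 : (Pi.single j 1 : B → ℝ) ≠ 0 := by
      intro hcon
      have := congrFun hcon j
      simp at this
    have hg0 : G (Pi.single j 1) ≠ 0 := by
      intro hc
      exact hw0 (hG (by simpa using hc))
    refine ⟨‖G (Pi.single j 1)‖⁻¹ • (Pi.single j 1 : B → ℝ), ?_⟩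
    rw [map_smul, norm_smul, norm_inv, norm_norm,
      inv_mul_cancel₀ (norm_ne_zero_iff.2 hg0)]
  apply IsGreatest.csSup_eq
  constructor
  · by_cases hz : G z = 0
    · obtain ⟨w, hw⟩ := hex
      exact ⟨w, hw, by rw [h, hz]; simp [hz]⟩
    · refine ⟨‖G z‖⁻¹ • z, ?_, ?_⟩
      · rw [map_smul, norm_smul, norm_inv, norm_norm,
          inv_mul_cancel₀ (norm_ne_zero_iff.2 hz)]
      · rw [h, map_smul, real_inner_smul_right, real_inner_self_eq_norm_sq]
        have hnz : (0:ℝ) < ‖G z‖ := norm_pos_iff.2 hz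
        field_simp
  · rintro r ⟨w, hw, rfl⟩
    rw [h]
    calc (inner ℝ (G z) (G w) : ℝ) ≤ ‖G z‖ * ‖G w‖ := real_inner_le_norm _ _
      _ = ‖G z‖ := by rw [hw, mul_one]

/-- Pointwise energy estimate for the L-scheme. -/
lemma pointwise_est (Lζ L : ℝ) (hLζ : 0 < Lζ) (hL : Lζ / 2 ≤ L)
    (ζ : ℝ → ℝ) (hmono : Monotone ζ) (hlip : ∀ a b : ℝ, |ζ a - ζ b| ≤ Lζ * |a - b|)
    (s t y : ℝ) :
    y * (L * (s - t) - L * y - (ζ s - ζ t)) ≤ L / 2 * ((s - t) ^ 2 - y ^ 2) := by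
  set w := ζ s - ζ t with hw
  have h1 : 0 ≤ (s - t) * w := by
    rcases le_total t s with hst | hst
    · exact mul_nonneg (sub_nonneg.2 hst) (sub_nonneg.2 (hmono hst))
    · nlinarith [mul_nonneg (sub_nonneg.2 hst) (sub_nonneg.2 (hmono hst))]
  have h2 : w ^ 2 ≤ Lζ * ((s - t) * w) := by
    have habs : |w| * |w| ≤ Lζ * |s - t| * |w| :=
      mul_le_mul_of_nonneg_right (hlip s t) (abs_nonneg _)
    calc w ^ 2 = |w| * |w| := by rw [abs_mul_abs_self, sq]
      _ ≤ Lζ * |s - t| * |w| := habs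
      _ = Lζ * ((s - t) * w) := by rw [mul_assoc, ← abs_mul, abs_of_nonneg h1]
  clear_value w
  have h3 : -(y * w) ≤ Lζ / 4 * ((s - t) - y) ^ 2 := by
    have h5 : 4 * Lζ * (-(y * w)) ≤ 4 * Lζ * (Lζ / 4 * ((s - t) - y) ^ 2) := by
      nlinarith [sq_nonneg (Lζ * ((s - t) - y) - 2 * w), h2]
    exact le_of_mul_le_mul_left h5 (by positivity)
  have h4 : Lζ / 4 * ((s - t) - y) ^ 2 ≤ L / 2 * ((s - t) - y) ^ 2 := by
    nlinarith [sq_nonneg ((s - t) - y)]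
  nlinarith [h3, h4]

/-- Lemma 3.1: convergence of the linearised L-solver in the dual norm. -/
theorem stmt_14 {B : Type*} [Fintype B] [Nonempty B] (m : B → ℝ) (hm : ∀ j, 0 < m j)
    {F : Type*} [NormedAddCommGroup F] [InnerProductSpace ℝ F]
    (G : (B → ℝ) →ₗ[ℝ] F) (hG : Function.Injective G)
    (δt Lζ L : ℝ) (hδt : 0 < δt) (hLζ : 0 < Lζ) (hL : L ≥ Lζ / 2)
    (ζ : ℝ → ℝ) (hmono : Monotone ζ) (hlip : ∀ a b : ℝ, |ζ a - ζ b| ≤ Lζ * |a - b|)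
    (b : (B → ℝ) →ₗ[ℝ] ℝ)
    (u : B → ℝ)
    (hu : ∀ φ : B → ℝ,
      innerM m u φ + δt * (inner ℝ (G (fun j => ζ (u j))) (G φ) : ℝ) = b φ)
    (useq : ℕ → B → ℝ)
    (hit : ∀ i : ℕ, 1 ≤ i → ∀ φ : B → ℝ,
      innerM m (useq i) φ + δt * L * (inner ℝ (G (useq i)) (G φ) : ℝ)
        = δt * (L * (inner ℝ (G (useq (i - 1))) (G φ) : ℝ)
            - (inner ℝ (G (fun j => ζ (useq (i - 1) j))) (G φ) : ℝ)) + b φ) :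
    Summable (fun i : ℕ => dualNorm m G (u - useq (i + 1)) ^ 2) ∧
      2 * (∑' i : ℕ, dualNorm m G (u - useq (i + 1)) ^ 2)
        ≤ δt * L * normM m (u - useq 0) ^ 2 ∧
      Filter.Tendsto (fun i : ℕ => dualNorm m G (u - useq i)) Filter.atTop (nhds 0) := by
  classical
  -- the "Riesz representative" of the error at step i+1
  set V : ℕ → B → ℝ := fun i =>
    L • (u - useq i) - L • (u - useq (i + 1)) -
      ((fun j => ζ (u j)) - fun j => ζ (useq i j)) with hV
  -- claim 1: error equation
  have claim1 : ∀ (i : ℕ) (φ : B → ℝ),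
      innerM m (u - useq (i + 1)) φ = (inner ℝ (G (δt • V i)) (G φ) : ℝ) := by
    intro i φ
    have h1 := hu φ
    have h2 := hit (i + 1) (by omega) φ
    simp only [Nat.add_sub_cancel] at h2
    rw [innerM_sub_left_s14]
    simp only [hV, map_smul, map_sub, inner_smul_left, inner_sub_left,
      RCLike.inner_apply, conj_trivial, real_inner_smul_left]
    linarith [h1, h2]
  -- claim 2: explicit dual norm
  have claim2 : ∀ i : ℕ, dualNorm m G (u - useq (i + 1)) = δt * ‖G (V i)‖ := by
    intro i
    rw [dualNorm_eq m G hG _ _ (claim1 i), map_smul, norm_smul, Real.norm_eq_abs,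
      abs_of_pos hδt]
  -- squared m-norms of the errors
  set N : ℕ → ℝ := fun i => innerM m (u - useq i) (u - useq i) with hN
  have hNnonneg : ∀ i, 0 ≤ N i := by
    intro i
    apply Finset.sum_nonneg
    intro j _
    have := (hm j).le
    nlinarith [mul_self_nonneg ((u - useq i) j)]
  -- claim 3: energy estimate
  have claim3 : ∀ i : ℕ, δt * ‖G (V i)‖ ^ 2 ≤ L / 2 * (N i - N (i + 1)) := by
    intro i
    have h := claim1 i (V i)
    rw [map_smul, real_inner_smul_left, real_inner_self_eq_norm_sq] at h
    rw [← h]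
    have hVj : ∀ j, V i j = L * (u j - useq i j) - L * (u j - useq (i + 1) j)
        - (ζ (u j) - ζ (useq i j)) := by
      intro j
      simp [hV, smul_eq_mul]
    calc innerM m (u - useq (i + 1)) (V i)
        = ∑ j, m j * (u j - useq (i + 1) j) * V i j := by
          simp [innerM]
      _ ≤ ∑ j, L / 2 * (m j * (u j - useq i j) ^ 2
            - m j * (u j - useq (i + 1) j) ^ 2) := by
          apply Finset.sum_le_sum
          intro j _
          rw [hVj j]
          have hp := pointwise_est Lζ L hLζ hL ζ hmono hlip (u j) (useq i j)
            (u j - useq (i + 1) j)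
          calc m j * (u j - useq (i + 1) j) *
                (L * (u j - useq i j) - L * (u j - useq (i + 1) j)
                  - (ζ (u j) - ζ (useq i j)))
              = m j * ((u j - useq (i + 1) j) *
                (L * (u j - useq i j) - L * (u j - useq (i + 1) j)
                  - (ζ (u j) - ζ (useq i j)))) := by ring
            _ ≤ m j * (L / 2 * ((u j - useq i j) ^ 2
                  - (u j - useq (i + 1) j) ^ 2)) :=
                mul_le_mul_of_nonneg_left hp (hm j).le
            _ = L / 2 * (m j * (u j - useq i j) ^ 2
                  - m j * (u j - useq (i + 1) j) ^ 2) := by ring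
      _ = L / 2 * (N i - N (i + 1)) := by
          rw [hN]
          simp only [innerM]
          rw [← Finset.sum_sub_distrib, Finset.mul_sum]
          refine Finset.sum_congr rfl fun j _ => ?_
          simp only [Pi.sub_apply]
          ring
  have hL0 : (0:ℝ) ≤ L := by linarith
  -- partial sums telescope
  have hsum : ∀ n : ℕ, ∑ i ∈ Finset.range n, δt * ‖G (V i)‖ ^ 2 ≤ L / 2 * N 0 := by
    intro n
    have h := Finset.sum_le_sum (fun i (_ : i ∈ Finset.range n) => claim3 i)
    rw [← Finset.mul_sum, ← Finset.mul_sum, Finset.sum_range_sub' N n] at h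
    rw [← Finset.mul_sum]
    nlinarith [hNnonneg n, hNnonneg 0, mul_nonneg hL0 (hNnonneg n)]
  -- squared dual norms
  have ha : ∀ i : ℕ, dualNorm m G (u - useq (i + 1)) ^ 2
      = δt * (δt * ‖G (V i)‖ ^ 2) := by
    intro i
    rw [claim2 i]
    ring
  have hnonneg : ∀ i : ℕ, 0 ≤ dualNorm m G (u - useq (i + 1)) ^ 2 :=
    fun i => sq_nonneg _
  have hpartial : ∀ n : ℕ,
      ∑ i ∈ Finset.range n, dualNorm m G (u - useq (i + 1)) ^ 2
        ≤ δt * (L / 2 * N 0) := by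
    intro n
    simp only [ha]
    rw [← Finset.mul_sum]
    exact mul_le_mul_of_nonneg_left (hsum n) hδt.le
  have hsummable : Summable (fun i : ℕ => dualNorm m G (u - useq (i + 1)) ^ 2) :=
    summable_of_sum_range_le hnonneg hpartial
  refine ⟨hsummable, ?_, ?_⟩
  · have htsum := Real.tsum_le_of_sum_range_le hnonneg hpartial
    have hN0 : normM m (u - useq 0) ^ 2 = N 0 := Real.sq_sqrt (hNnonneg 0)
    rw [hN0]
    linarith
  · have h0 : Filter.Tendsto (fun i : ℕ => dualNorm m G (u - useq (i + 1)) ^ 2)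
        Filter.atTop (nhds 0) := hsummable.tendsto_atTop_zero
    have hsqrt : Filter.Tendsto
        (fun i : ℕ => Real.sqrt (dualNorm m G (u - useq (i + 1)) ^ 2))
        Filter.atTop (nhds 0) := by
      have := (Real.continuous_sqrt.tendsto 0).comp h0
      simpa [Function.comp_def] using this
    rw [← Filter.tendsto_add_atTop_iff_nat 1]
    refine hsqrt.congr fun i => ?_
    rw [Real.sqrt_sq]
    rw [claim2 i]
    positivity
end
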